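/- arXiv:2304.01206 — 4 statements merged into one kernel-verified Lean document; each statement's English description precedes it below -/
import Mathlib

section
/- The number Q(n) of squarefree natural numbers at most n satisfies Q(n) = n/ζ(2) + o(n); equivalently, Q(n)/n → 6/π² as n → ∞. -/
/-!
Since `∑_{d² ∣ m} μ(d)` is `1` when `m` is squarefree and `0` otherwise, swapping the order of
summation gives `Q(n) = ∑_{d ≤ n} μ(d) ⌊n / d²⌋`. After dividing by `n`, the `d`-th term tends to
`μ(d) / d²` and is bounded by `1 / d²`, so by Tannery's theorem `Q(n) / n` tends to
`∑ μ(d) / d² = 1 / ζ(2) = 6 / π²`.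
-/

open Filter Finset ArithmeticFunction Real
open scoped ArithmeticFunction.Moebius LSeries.notation Topology

namespace Nat

theorem dvd_of_sq_dvd_sq_mul {a b d : ℕ} (ha : Squarefree a) (h : d ^ 2 ∣ b ^ 2 * a) : d ∣ b := by
  rcases eq_or_ne b 0 with rfl | hb
  · exact dvd_zero d
  have ha0 := ha.ne_zero
  have hd : d ≠ 0 := by rintro rfl; simp [hb, ha0] at h
  rw [← factorization_le_iff_dvd hd hb]
  rw [← factorization_le_iff_dvd (by positivity) (by positivity)] at h
  intro p
  have hp := h p
  simp only [factorization_mul (pow_ne_zero 2 hb) ha0, factorization_pow, Finsupp.smul_apply,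
    Finsupp.add_apply, smul_eq_mul] at hp
  have := ha.natFactorization_le_one p
  omega

theorem filter_sq_dvd_divisors_sq_mul {a b : ℕ} (ha : Squarefree a) (hb : b ≠ 0) :
    {d ∈ (b ^ 2 * a).divisors | d ^ 2 ∣ b ^ 2 * a} = b.divisors := by
  ext d
  simp only [mem_filter, mem_divisors]
  constructor
  · rintro ⟨-, h⟩
    exact ⟨dvd_of_sq_dvd_sq_mul ha h, hb⟩
  · rintro ⟨hd, -⟩
    have hsq : d ^ 2 ∣ b ^ 2 * a := (pow_dvd_pow_of_dvd hd 2).mul_right a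
    exact ⟨⟨(dvd_pow_self d two_ne_zero).trans hsq, by simp [hb, ha.ne_zero]⟩, hsq⟩

theorem sum_moebius_sq_dvd {m : ℕ} (hm : m ≠ 0) :
    ∑ d ∈ m.divisors with d ^ 2 ∣ m, μ d = if Squarefree m then 1 else 0 := by
  obtain ⟨a, b, rfl, ha⟩ := sq_mul_squarefree m
  have hb : b ≠ 0 := by rintro rfl; simp at hm
  have hsq : Squarefree (b ^ 2 * a) ↔ b = 1 :=
    ⟨fun h => Nat.isUnit_iff.mp (h b ⟨a, by ring⟩), by rintro rfl; simpa⟩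
  rw [filter_sq_dvd_divisors_sq_mul ha hb, ← coe_mul_zeta_apply, moebius_mul_coe_zeta, one_apply]
  simp only [hsq]

theorem card_filter_squarefree_Icc_eq_sum_moebius (n : ℕ) :
    (#{m ∈ Icc 1 n | Squarefree m} : ℤ) = ∑ d ∈ Icc 1 n, μ d * (n / d ^ 2 : ℕ) := by
  calc (#{m ∈ Icc 1 n | Squarefree m} : ℤ)
      = ∑ m ∈ Icc 1 n, ∑ d ∈ m.divisors with d ^ 2 ∣ m, μ d := by
        rw [natCast_card_filter]
        refine sum_congr rfl fun m hm => (sum_moebius_sq_dvd ?_).symm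
        simp only [mem_Icc] at hm
        omega
    _ = ∑ d ∈ Icc 1 n, ∑ m ∈ Icc 1 n with d ^ 2 ∣ m, μ d := by
        refine sum_comm' fun m d => ?_
        simp only [mem_Icc, mem_filter, mem_divisors]
        constructor
        · rintro ⟨hm, ⟨hdm, -⟩, hsq⟩
          exact ⟨⟨hm, hsq⟩, pos_of_dvd_of_pos hdm (by omega), (le_of_dvd (by omega) hdm).trans hm.2⟩
        · rintro ⟨⟨hm, hsq⟩, -⟩
          exact ⟨hm, ⟨(dvd_pow_self d two_ne_zero).trans hsq, by omega⟩, hsq⟩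
    _ = ∑ d ∈ Icc 1 n, μ d * (n / d ^ 2 : ℕ) := by
        refine sum_congr rfl fun d _ => ?_
        rw [sum_const, nsmul_eq_mul, mul_comm, show Icc 1 n = Ioc 0 n from Icc_succ_left_eq_Ioc 0 n,
          Ioc_filter_dvd_card_eq_div]

end Nat

theorem LSeries_moebius_eq_inv_riemannZeta {s : ℂ} (hs : 1 < s.re) :
    L ↗μ s = (riemannZeta s)⁻¹ := by
  rw [← LSeries_zeta_eq_riemannZeta hs]
  exact eq_inv_of_mul_eq_one_right (LSeries_zeta_mul_Lseries_moebius hs)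

theorem tsum_moebius_div_sq : ∑' d : ℕ, (μ d : ℝ) / d ^ 2 = 6 / π ^ 2 := by
  have h := LSeries_moebius_eq_inv_riemannZeta (s := 2) (by norm_num)
  rw [riemannZeta_two, inv_div, LSeries] at h
  apply Complex.ofReal_injective
  rw [Complex.ofReal_tsum]
  push_cast
  rw [← h]
  refine tsum_congr fun d => ?_
  rw [LSeries.term_of_ne_zero' two_ne_zero, Complex.cpow_ofNat]

theorem natCast_div_div_le_inv (n k : ℕ) : ((n / k : ℕ) : ℝ) / n ≤ (k : ℝ)⁻¹ := by
  rcases eq_or_ne n 0 with rfl | hn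
  · simp
  calc ((n / k : ℕ) : ℝ) / n ≤ (n / k : ℝ) / n := by gcongr; exact Nat.cast_div_le
    _ = (k : ℝ)⁻¹ := by field_simp

theorem tendsto_natCast_div_div_atTop (k : ℕ) :
    Tendsto (fun n : ℕ => ((n / k : ℕ) : ℝ) / n) atTop (𝓝 (k : ℝ)⁻¹) := by
  rcases eq_or_ne k 0 with rfl | hk
  · simp
  have hfloor : Tendsto (fun n : ℕ => (⌊(n / k : ℝ)⌋₊ : ℝ) / (n / k : ℝ)) atTop (𝓝 1) :=
    tendsto_nat_floor_div_atTop.comp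
      (tendsto_natCast_atTop_atTop.atTop_div_const (by positivity))
  convert hfloor.mul_const (k : ℝ)⁻¹ using 2 with n
  · rw [Nat.floor_div_eq_div]; field_simp
  · rw [one_mul]

theorem card_filter_squarefree_Icc_div_eq_tsum (n : ℕ) :
    (#{m ∈ Icc 1 n | Squarefree m} : ℝ) / n =
      ∑' d : ℕ, (μ d : ℝ) * (((n / d ^ 2 : ℕ) : ℝ) / n) := by
  have hcount : (#{m ∈ Icc 1 n | Squarefree m} : ℝ) =
      ∑ d ∈ Icc 1 n, (μ d : ℝ) * (n / d ^ 2 : ℕ) := by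
    have h := congrArg (Int.cast : ℤ → ℝ) (Nat.card_filter_squarefree_Icc_eq_sum_moebius n)
    push_cast at h
    exact h
  have hvanish : ∀ d ∉ Icc 1 n, (μ d : ℝ) * (((n / d ^ 2 : ℕ) : ℝ) / n) = 0 := by
    intro d hd
    rcases eq_or_ne d 0 with rfl | hd0
    · simp
    have hnd : n < d ^ 2 := by
      simp only [mem_Icc, not_and_or, not_le] at hd
      exact (by omega : n < d).trans_le (Nat.le_self_pow two_ne_zero d)
    simp [Nat.div_eq_of_lt hnd]
  rw [hcount, sum_div, tsum_eq_sum hvanish]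
  simp_rw [mul_div_assoc]

theorem squarefree_count_asymptotic :
    Tendsto (fun n : ℕ =>
        (((Finset.Icc 1 n).filter Squarefree).card : ℝ) / n)
      atTop (nhds (6 / Real.pi ^ 2)) := by
  simp_rw [card_filter_squarefree_Icc_div_eq_tsum, ← tsum_moebius_div_sq]
  refine tendsto_tsum_of_dominated_convergence (bound := fun d : ℕ => ((d : ℝ) ^ 2)⁻¹)
    (summable_nat_pow_inv.mpr one_lt_two) (fun d => ?_) (Eventually.of_forall fun n d => ?_)
  · have h := (tendsto_natCast_div_div_atTop (d ^ 2)).const_mul (μ d : ℝ)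
    rwa [Nat.cast_pow, ← div_eq_mul_inv] at h
  · calc ‖(μ d : ℝ) * (((n / d ^ 2 : ℕ) : ℝ) / n)‖
        = |(μ d : ℝ)| * (((n / d ^ 2 : ℕ) : ℝ) / n) := by
          rw [norm_mul, norm_eq_abs, norm_of_nonneg (by positivity)]
      _ ≤ 1 * ((d : ℝ) ^ 2)⁻¹ := by
          gcongr
          · exact_mod_cast abs_moebius_le_one
          · exact_mod_cast natCast_div_div_le_inv n (d ^ 2)
      _ = ((d : ℝ) ^ 2)⁻¹ := one_mul _
end

section
/- The number of powerful numbers at most n is o(n), i.e., (1/n)·#{m ≤ n : m powerful} → 0 as n → ∞. -/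
/-!
Every powerful `m` has the form `a ^ 3 * c ^ 2`: write `m = b ^ 2 * a` with `a` squarefree,
then each prime of `a` divides `b`, so `a ∣ b`. Hence there are at most
`n ^ (1/3) * n ^ (1/2) = n ^ (5/6)` powerful numbers up to `n`.
-/

open Filter Finset

namespace Nat

def Powerful (m : ℕ) : Prop := ∀ p : ℕ, p.Prime → p ∣ m → p ^ 2 ∣ m

theorem Powerful.exists_pow_three_mul_sq_eq {m : ℕ} (hm : m.Powerful) :
    ∃ a c : ℕ, a ^ 3 * c ^ 2 = m := by
  obtain ⟨a, b, rfl, ha⟩ := sq_mul_squarefree m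
  have hab : a ∣ b := by
    rw [← prod_primeFactors_of_squarefree ha]
    refine prod_primes_dvd b (fun p hp => (prime_of_mem_primeFactors hp).prime) fun p hp => ?_
    have hp' := prime_of_mem_primeFactors hp
    have hsq : p ^ (1 + 1) ∣ b ^ 2 * a :=
      hm p hp' (dvd_mul_of_dvd_right (dvd_of_mem_primeFactors hp) _)
    exact hp'.prime.dvd_of_dvd_pow
      (pow_one p ▸ ha.pow_dvd_of_squarefree_of_pow_succ_dvd_mul_left hp'.prime hsq)
  obtain ⟨c, rfl⟩ := hab
  exact ⟨a, c, by ring⟩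

theorem le_floor_rpow_inv_of_pow_le {a k : ℕ} {x : ℝ} (hk : k ≠ 0) (hx : 0 ≤ x)
    (h : (a : ℝ) ^ k ≤ x) : a ≤ ⌊x ^ (k : ℝ)⁻¹⌋₊ := by
  apply le_floor
  rwa [Real.le_rpow_inv_iff_of_pos (by positivity) hx (by positivity), Real.rpow_natCast]

theorem filter_powerful_Icc_subset_image (n : ℕ) [DecidablePred Powerful] :
    (Icc 1 n).filter Powerful ⊆
      (Icc 1 ⌊(n : ℝ) ^ (3 : ℝ)⁻¹⌋₊ ×ˢ Icc 1 ⌊(n : ℝ) ^ (2 : ℝ)⁻¹⌋₊).image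
        fun x => x.1 ^ 3 * x.2 ^ 2 := by
  intro m hm
  obtain ⟨⟨hm1, hmn⟩, hpow⟩ := by simpa only [mem_filter, mem_Icc] using hm
  obtain ⟨a, c, rfl⟩ := hpow.exists_pow_three_mul_sq_eq
  have ha : 0 < a := pos_of_ne_zero fun h => by simp [h] at hm1
  have hc : 0 < c := pos_of_ne_zero fun h => by simp [h] at hm1
  have ha3 : (a : ℝ) ^ 3 ≤ n := by
    exact_mod_cast (Nat.le_mul_of_pos_right _ (by positivity)).trans hmn
  have hc2 : (c : ℝ) ^ 2 ≤ n := by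
    exact_mod_cast (Nat.le_mul_of_pos_left _ (by positivity)).trans hmn
  refine mem_image.2 ⟨(a, c), mem_product.2 ⟨mem_Icc.2 ⟨ha, ?_⟩, mem_Icc.2 ⟨hc, ?_⟩⟩, rfl⟩
  · exact_mod_cast le_floor_rpow_inv_of_pow_le three_ne_zero n.cast_nonneg ha3
  · exact_mod_cast le_floor_rpow_inv_of_pow_le two_ne_zero n.cast_nonneg hc2

theorem card_filter_powerful_Icc_le (n : ℕ) [DecidablePred Powerful] :
    (((Icc 1 n).filter Powerful).card : ℝ) ≤ (n : ℝ) ^ (3 : ℝ)⁻¹ * (n : ℝ) ^ (2 : ℝ)⁻¹ := by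
  have hcard := (card_le_card (filter_powerful_Icc_subset_image n)).trans Finset.card_image_le
  rw [card_product, card_Icc, card_Icc, add_tsub_cancel_right, add_tsub_cancel_right] at hcard
  calc (((Icc 1 n).filter Powerful).card : ℝ)
      ≤ (⌊(n : ℝ) ^ (3 : ℝ)⁻¹⌋₊ * ⌊(n : ℝ) ^ (2 : ℝ)⁻¹⌋₊ : ℕ) := by exact_mod_cast hcard
    _ ≤ (n : ℝ) ^ (3 : ℝ)⁻¹ * (n : ℝ) ^ (2 : ℝ)⁻¹ := by
      push_cast
      gcongr <;> exact floor_le (by positivity)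

end Nat

open scoped Classical in
theorem powerful_count_little_o :
    Tendsto (fun n : ℕ =>
        (((Finset.Icc 1 n).filter (fun m => ∀ p : ℕ, p.Prime → p ∣ m → p ^ 2 ∣ m)).card : ℝ) / n)
      atTop (nhds 0) := by
  have hdecay : Tendsto (fun n : ℕ => (n : ℝ) ^ (-(6 : ℝ)⁻¹)) atTop (nhds 0) :=
    (tendsto_rpow_neg_atTop (by norm_num)).comp tendsto_natCast_atTop_atTop
  refine squeeze_zero' (Eventually.of_forall fun n => by positivity) ?_ hdecay
  filter_upwards [eventually_gt_atTop 0] with n hn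
  have hn' : (n : ℝ) ≠ 0 := by positivity
  calc _ ≤ (n : ℝ) ^ (3 : ℝ)⁻¹ * (n : ℝ) ^ (2 : ℝ)⁻¹ / n :=
        div_le_div_of_nonneg_right (Nat.card_filter_powerful_Icc_le n) n.cast_nonneg
    _ = (n : ℝ) ^ (-(6 : ℝ)⁻¹) := by
        rw [← Real.rpow_add (by positivity), ← Real.rpow_sub_one hn']
        norm_num
end

section
/- If g is a real multiplicative arithmetic function with |g(m)| ≤ 1 for all m, and the series ∑_p (1 - g(p))/p over primes converges, then the infinite product ∏_p (1 - 1/p)·∑_{α ≥ 0} g(p^α)/p^α converges to a (finite, possibly zero) limit; in fact each factor equals 1 - (1-g(p))/p + O(1/p²) and the product converges. -/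
/-! Splitting off the first two terms, `∑ g(p^α)/p^α = 1 + g(p)/p + R` with
`|R| ≤ p⁻² / (1 - p⁻¹)`, so the Euler factor at `p` is `1 - (1 - g p)/p + O(1/p²)`. The
deviations of the factors from `1` are therefore summable over the primes, and a real product
`∏ (1 + aₚ)` with `∑ aₚ` absolutely convergent converges. -/

open Filter Finset Topology

theorem Real.exists_tendsto_prod_filter_of_summable_sub_one {f : ℕ → ℝ} {P : ℕ → Prop}
    [DecidablePred P] (hf : Summable fun n : {n // P n} => f n - 1) :
    ∃ L, Tendsto (fun n => ∏ p ∈ (range (n + 1)).filter P, f p) atTop (𝓝 L) := by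
  obtain ⟨L, hL⟩ := Real.multipliable_one_add_of_summable hf
  have hprod : HasProd ({n | P n}.mulIndicator f) L :=
    hasProd_subtype_iff_mulIndicator.mp (by simpa using hL : HasProd (fun n : {n // P n} => f n) L)
  refine ⟨L, (hprod.tendsto_prod_nat.comp (tendsto_add_atTop_nat 1)).congr fun n => ?_⟩
  exact prod_mulIndicator_eq_prod_filter (range (n + 1)) (fun _ => f) (fun _ => {n | P n}) id

theorem abs_one_sub_one_div_mul_tsum_div_pow_sub_one_le {c : ℕ → ℝ} {q : ℝ} (hq : 1 < q)
    (hc0 : c 0 = 1) (hc : ∀ n, |c n| ≤ 1) :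
    |(1 - 1 / q) * ∑' n, c n / q ^ n - 1| ≤ (1 - c 1) / q + 2 / q ^ 2 := by
  have hq0 : 0 < q := by linarith
  have hr0 : 0 ≤ 1 / q := by positivity
  have hr1 : 1 / q < 1 := (div_lt_one hq0).mpr hq
  have hterm : ∀ n, ‖c n / q ^ n‖ ≤ (1 / q) ^ n := fun n => by
    rw [Real.norm_eq_abs, abs_div, abs_of_pos (pow_pos hq0 n), div_pow, one_pow]
    exact div_le_div_of_nonneg_right (hc n) (by positivity)
  have hsum : Summable fun n => c n / q ^ n :=
    (summable_geometric_of_lt_one hr0 hr1).of_norm_bounded hterm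
  set R := ∑' n, c (n + 2) / q ^ (n + 2)
  have hR : |R| ≤ (1 / q) ^ 2 * (1 - 1 / q)⁻¹ :=
    tsum_of_norm_bounded ((hasSum_geometric_of_lt_one hr0 hr1).mul_left _) fun n =>
      (hterm (n + 2)).trans_eq (pow_add _ _ _ |>.trans (mul_comm _ _))
  have hsplit : ∑' n, c n / q ^ n = 1 + c 1 / q + R := by
    rw [← hsum.sum_add_tsum_nat_add 2]
    simp only [Finset.sum_range_succ, Finset.sum_range_zero, hc0, pow_zero, pow_one, div_one,
      zero_add]
    rfl
  have htail : |(1 - 1 / q) * R| ≤ 1 / q ^ 2 := by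
    rw [abs_mul, abs_of_pos (sub_pos.mpr hr1)]
    calc (1 - 1 / q) * |R| ≤ (1 - 1 / q) * ((1 / q) ^ 2 * (1 - 1 / q)⁻¹) := by gcongr
      _ = 1 / q ^ 2 := by
        rw [mul_left_comm, mul_inv_cancel₀ (sub_pos.mpr hr1).ne', mul_one, div_pow, one_pow]
  have hc1 : |c 1 / q ^ 2| ≤ 1 / q ^ 2 := by
    rw [abs_div, abs_of_pos (pow_pos hq0 2)]
    exact div_le_div_of_nonneg_right (hc 1) (by positivity)
  have hc1' : |(c 1 - 1) / q| = (1 - c 1) / q := by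
    rw [abs_div, abs_of_pos hq0, abs_sub_comm, abs_of_nonneg (by linarith [(abs_le.mp (hc 1)).2])]
  calc |(1 - 1 / q) * ∑' n, c n / q ^ n - 1|
      = |(c 1 - 1) / q - c 1 / q ^ 2 + (1 - 1 / q) * R| := by
        rw [hsplit]; congr 1; field_simp; ring
    _ ≤ |(c 1 - 1) / q| + |c 1 / q ^ 2| + |(1 - 1 / q) * R| :=
        (abs_add_le _ _).trans (add_le_add_left (abs_sub _ _) _)
    _ ≤ (1 - c 1) / q + (1 / q ^ 2 + 1 / q ^ 2) := by rw [hc1', add_assoc]; gcongr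
    _ = (1 - c 1) / q + 2 / q ^ 2 := by ring

theorem euler_product_converges_of_summable_general (g : ℕ → ℝ)
    (hg1 : g 1 = 1)
    (hbd : ∀ m : ℕ, |g m| ≤ 1)
    (hsum : Summable (fun p : {p : ℕ // p.Prime} => (1 - g p) / (p : ℝ))) :
    ∃ L : ℝ, Tendsto (fun n : ℕ =>
        ∏ p ∈ (Finset.range (n + 1)).filter Nat.Prime,
          (1 - 1 / (p : ℝ)) * ∑' α : ℕ, g (p ^ α) / (p : ℝ) ^ α)
      atTop (nhds L) := by
  refine Real.exists_tendsto_prod_filter_of_summable_sub_one ?_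
  have hsq : Summable fun p : {p : ℕ // p.Prime} => 2 / (p : ℝ) ^ 2 :=
    (((Real.summable_one_div_nat_pow.mpr one_lt_two).comp_injective Subtype.val_injective).mul_left
      2).congr fun _ => mul_one_div _ _
  refine (hsum.add hsq).of_norm_bounded fun p => ?_
  have hp : (1 : ℝ) < p := by exact_mod_cast p.2.one_lt
  simpa using abs_one_sub_one_div_mul_tsum_div_pow_sub_one_le (c := fun α => g (p ^ α)) hp
    (by simp [hg1]) (fun _ => hbd _)

theorem euler_product_converges_of_summable (g : ℕ → ℝ)
    (hg1 : g 1 = 1)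
    (hmul : ∀ m n : ℕ, Nat.Coprime m n → g (m * n) = g m * g n)
    (hbd : ∀ m : ℕ, |g m| ≤ 1)
    (hsum : Summable (fun p : {p : ℕ // p.Prime} => (1 - g p) / (p : ℝ))) :
    ∃ L : ℝ, Tendsto (fun n : ℕ =>
        ∏ p ∈ (Finset.range (n + 1)).filter Nat.Prime,
          (1 - 1 / (p : ℝ)) * ∑' α : ℕ, g (p ^ α) / (p : ℝ) ^ α)
      atTop (nhds L) :=
  euler_product_converges_of_summable_general g hg1 hbd hsum
end

section
/- If g is a real multiplicative function with |g(m)| ≤ 1 and ∑_p (1 - g(p))/p = ∞ (the series of nonnegative terms diverges, assuming g(p) ≤ 1 real), then the partial products ∏_{p ≤ n} (1 - 1/p)·∑_{α ≥ 0} g(p^α)/p^α tend to 0 as n → ∞. -/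
/-!
Expanding the geometric-type series, the Euler factor at `p` is
`1 - (1 - g p) / p + O(1 / p²)` with an absolute `O`, hence its absolute value is at most
`exp (2 / p² - (1 - g p) / p)`. The partial product is therefore bounded in absolute value by
`exp (2 ∑ₖ 1 / k² - ∑_{p ≤ n} (1 - g p) / p)`, and the sum in the exponent diverges since its
terms are nonnegative and not summable.
-/

open Filter

section PowerSeries

variable {c : ℕ → ℝ} {x : ℝ}

theorem abs_mul_pow_le_pow (hc : ∀ n, |c n| ≤ 1) (hx0 : 0 ≤ x) (n : ℕ) :
    |c n * x ^ n| ≤ x ^ n := by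
  rw [abs_mul, abs_of_nonneg (pow_nonneg hx0 n)]
  exact mul_le_of_le_one_left (pow_nonneg hx0 n) (hc n)

theorem summable_mul_pow_of_abs_le_one (hc : ∀ n, |c n| ≤ 1) (hx0 : 0 ≤ x) (hx1 : x < 1) :
    Summable fun n => c n * x ^ n :=
  (summable_geometric_of_lt_one hx0 hx1).of_norm_bounded (abs_mul_pow_le_pow hc hx0)

theorem abs_tsum_mul_pow_le_of_abs_le_one (hc : ∀ n, |c n| ≤ 1) (hx0 : 0 ≤ x) (hx1 : x < 1) :
    |∑' n, c n * x ^ n| ≤ (1 - x)⁻¹ :=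
  tsum_of_norm_bounded (f := fun n => c n * x ^ n) (hasSum_geometric_of_lt_one hx0 hx1)
    (abs_mul_pow_le_pow hc hx0)

theorem tsum_mul_pow_eq_add_sq_mul (hc : ∀ n, |c n| ≤ 1) (hx0 : 0 ≤ x) (hx1 : x < 1) :
    ∑' n, c n * x ^ n = c 0 + c 1 * x + x ^ 2 * ∑' n, c (n + 2) * x ^ n := by
  rw [← (summable_mul_pow_of_abs_le_one hc hx0 hx1).sum_add_tsum_nat_add 2, ← tsum_mul_left]
  simp only [Finset.sum_range_succ, Finset.sum_range_zero, pow_add]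
  congr 1
  · ring
  · exact tsum_congr fun n => by ring

theorem abs_one_sub_mul_tsum_mul_pow_le_exp (hc0 : c 0 = 1) (hc : ∀ n, |c n| ≤ 1)
    (hx0 : 0 ≤ x) (hx : x ≤ 1 / 2) :
    |(1 - x) * ∑' n, c n * x ^ n| ≤ Real.exp (2 * x ^ 2 - (1 - c 1) * x) := by
  have hx1 : x < 1 := by linarith
  have hR : (1 - x) * |∑' n, c (n + 2) * x ^ n| ≤ 1 := by
    calc (1 - x) * |∑' n, c (n + 2) * x ^ n| ≤ (1 - x) * (1 - x)⁻¹ := by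
          gcongr
          exact abs_tsum_mul_pow_le_of_abs_le_one (fun n => hc (n + 2)) hx0 hx1
      _ = 1 := mul_inv_cancel₀ (by linarith)
  rw [tsum_mul_pow_eq_add_sq_mul hc hx0 hx1, hc0]
  generalize ∑' n, c (n + 2) * x ^ n = R at hR ⊢
  obtain ⟨hc1l, hc1u⟩ := abs_le.mp (hc 1)
  have hmain : 0 ≤ 1 - (1 - c 1) * x := by nlinarith
  have herr : |(1 - x) * x ^ 2 * R - c 1 * x ^ 2| ≤ 2 * x ^ 2 := by
    calc |(1 - x) * x ^ 2 * R - c 1 * x ^ 2|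
        ≤ |(1 - x) * x ^ 2 * R| + |c 1 * x ^ 2| := abs_sub _ _
      _ = x ^ 2 * ((1 - x) * |R|) + |c 1| * x ^ 2 := by
          rw [abs_mul, abs_mul, abs_mul, abs_of_nonneg (by linarith : 0 ≤ 1 - x),
            abs_of_nonneg (sq_nonneg x)]
          ring
      _ ≤ x ^ 2 * 1 + 1 * x ^ 2 := by gcongr; exact hc 1
      _ = 2 * x ^ 2 := by ring
  calc |(1 - x) * (1 + c 1 * x + x ^ 2 * R)|
      = |(1 - (1 - c 1) * x) + ((1 - x) * x ^ 2 * R - c 1 * x ^ 2)| := by ring_nf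
    _ ≤ (1 - (1 - c 1) * x) + 2 * x ^ 2 := by
        grw [abs_add_le, abs_of_nonneg hmain, herr]
    _ ≤ Real.exp (2 * x ^ 2 - (1 - c 1) * x) := by
        linarith [Real.add_one_le_exp (2 * x ^ 2 - (1 - c 1) * x)]

end PowerSeries

theorem abs_euler_factor_le_exp {g : ℕ → ℝ} (hg1 : g 1 = 1) (hbd : ∀ m, |g m| ≤ 1)
    {p : ℕ} (hp : 2 ≤ p) :
    |(1 - 1 / (p : ℝ)) * ∑' α : ℕ, g (p ^ α) / (p : ℝ) ^ α|
      ≤ Real.exp (2 / (p : ℝ) ^ 2 - (1 - g p) / p) := by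
  have hp2 : (2 : ℝ) ≤ p := by exact_mod_cast hp
  have h := abs_one_sub_mul_tsum_mul_pow_le_exp (c := fun α => g (p ^ α)) (x := 1 / p)
    (by simpa using hg1) (fun α => hbd _) (by positivity)
    (by rw [div_le_div_iff₀ (by positivity) two_pos]; linarith)
  simp only [pow_one, one_div, inv_pow, ← div_eq_mul_inv] at h
  convert h using 3; ring

theorem abs_prod_le_exp_sum {ι : Type*} (s : Finset ι) {f u : ι → ℝ}
    (h : ∀ i ∈ s, |f i| ≤ Real.exp (u i)) :
    |∏ i ∈ s, f i| ≤ Real.exp (∑ i ∈ s, u i) := by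
  rw [Finset.abs_prod, Real.exp_sum]
  exact Finset.prod_le_prod (fun i _ => abs_nonneg _) h

theorem tendsto_sum_filter_range_atTop_of_not_summable {P : ℕ → Prop} [DecidablePred P]
    {f : ℕ → ℝ} (hf : ∀ k, P k → 0 ≤ f k) (h : ¬ Summable fun k : {k : ℕ // P k} => f k) :
    Tendsto (fun n => ∑ k ∈ (Finset.range (n + 1)).filter P, f k) atTop atTop := by
  set t := {k : ℕ | P k}.indicator f
  have ht : ∀ n, 0 ≤ t n := Set.indicator_nonneg hf
  have hsum : ∀ n, ∑ k ∈ (Finset.range n).filter P, f k = ∑ i ∈ Finset.range n, t i :=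
    fun n => by simp [t, Finset.sum_filter, Set.indicator_apply]
  simp only [hsum]
  exact ((not_summable_iff_tendsto_nat_atTop_of_nonneg ht).1
    (mt summable_subtype_iff_indicator.2 h)).comp (tendsto_add_atTop_nat 1)

theorem euler_product_tendsto_zero_of_not_summable_general (g : ℕ → ℝ)
    (hg1 : g 1 = 1)
    (hbd : ∀ m : ℕ, |g m| ≤ 1)
    (hdiv : ¬ Summable (fun p : {p : ℕ // p.Prime} => (1 - g p) / (p : ℝ))) :
    Tendsto (fun n : ℕ =>
        ∏ p ∈ (Finset.range (n + 1)).filter Nat.Prime,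
          (1 - 1 / (p : ℝ)) * ∑' α : ℕ, g (p ^ α) / (p : ℝ) ^ α)
      atTop (nhds 0) := by
  set C := ∑' k : ℕ, 1 / (k : ℝ) ^ 2
  set T := fun n => ∑ p ∈ (Finset.range (n + 1)).filter Nat.Prime, (1 - g p) / (p : ℝ)
  have hT : Tendsto T atTop atTop := tendsto_sum_filter_range_atTop_of_not_summable
    (fun p hp => div_nonneg (by linarith [(abs_le.mp (hbd p)).2]) (Nat.cast_nonneg p)) hdiv
  have hbound : ∀ n, |∏ p ∈ (Finset.range (n + 1)).filter Nat.Prime,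
      (1 - 1 / (p : ℝ)) * ∑' α : ℕ, g (p ^ α) / (p : ℝ) ^ α| ≤ Real.exp (2 * C - T n) := by
    intro n
    set F := (Finset.range (n + 1)).filter Nat.Prime
    refine (abs_prod_le_exp_sum F fun p hp =>
      abs_euler_factor_le_exp hg1 hbd (Finset.mem_filter.1 hp).2.two_le).trans (Real.exp_le_exp.2 ?_)
    have hC : ∑ p ∈ F, 1 / (p : ℝ) ^ 2 ≤ C :=
      Summable.sum_le_tsum _ (fun _ _ => by positivity) (Real.summable_one_div_nat_pow.2 one_lt_two)
    calc ∑ p ∈ F, (2 / (p : ℝ) ^ 2 - (1 - g p) / p) = 2 * ∑ p ∈ F, 1 / (p : ℝ) ^ 2 - T n := by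
          rw [Finset.sum_sub_distrib, Finset.mul_sum]
          simp only [mul_one_div, T, F]
      _ ≤ 2 * C - T n := by linarith
  refine squeeze_zero_norm hbound (Real.tendsto_exp_atBot.comp ?_)
  exact tendsto_atBot_add_const_left _ _ (tendsto_neg_atTop_atBot.comp hT)

theorem euler_product_tendsto_zero_of_not_summable (g : ℕ → ℝ)
    (hg1 : g 1 = 1)
    (hmul : ∀ m n : ℕ, Nat.Coprime m n → g (m * n) = g m * g n)
    (hbd : ∀ m : ℕ, |g m| ≤ 1)
    (hdiv : ¬ Summable (fun p : {p : ℕ // p.Prime} => (1 - g p) / (p : ℝ))) :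
    Tendsto (fun n : ℕ =>
        ∏ p ∈ (Finset.range (n + 1)).filter Nat.Prime,
          (1 - 1 / (p : ℝ)) * ∑' α : ℕ, g (p ^ α) / (p : ℝ) ^ α)
      atTop (nhds 0) :=
  euler_product_tendsto_zero_of_not_summable_general g hg1 hbd hdiv
end
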